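/- arXiv:2406.03213 — 5 statements merged into one kernel-verified Lean document; each statement's English description precedes it below -/
import Mathlib

section
/- Let a < b with a,b ∈ [1,∞), let c, k be real constants, and suppose f : (a,b) → ℝ satisfies the first-order linear ODE f(s) + s(s−1)f'(s) = c for all s ∈ (a,b), and additionally (1−s)f(s) → 0 as s → 1⁺ (with 1 in the closure of (a,b)). Then f(s) = c for all s ∈ (a,b). -/
/-! The quantity `((1 - s) f s - c) / s` is a first integral of `f + s (s - 1) f' = c`: its
derivative vanishes identically. Since `1` lies in the closure of `(a, b)` with `a ≥ 1`, the
interval is `(1, b)`, and the boundary condition gives the first integral the value `-c` at `1⁺`.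
Hence `(1 - s) f s = c (1 - s)` on `(1, b)`, i.e. `f = c`. -/

open Set Filter Topology

theorem hasDerivAt_one_sub_mul_sub_div_zero {f f' : ℝ → ℝ} {c s : ℝ} (hs : s ≠ 0)
    (hf : HasDerivAt f (f' s) s) (hode : f s + s * (s - 1) * f' s = c) :
    HasDerivAt (fun t => ((1 - t) * f t - c) / t) 0 s := by
  have hnum : HasDerivAt (fun t => (1 - t) * f t - c) (-f s + (1 - s) * f' s) s := by
    simpa using (((hasDerivAt_id s).const_sub 1).mul hf).sub_const c
  have hzero : ((-f s + (1 - s) * f' s) * s - ((1 - s) * f s - c) * 1) / s ^ 2 = 0 := by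
    rw [div_eq_zero_iff]
    left
    linear_combination -hode
  have hquot := hnum.div (hasDerivAt_id' s) hs
  rwa [hzero] at hquot

theorem eqOn_const_of_hasDerivAt_zero_of_tendsto {E : Type*} [NormedAddCommGroup E]
    [NormedSpace ℝ E] {g : ℝ → E} {a b : ℝ} {L : E} (hab : a < b)
    (hg : ∀ s ∈ Ioo a b, HasDerivAt g 0 s) (hlim : Tendsto g (𝓝[Ioo a b] a) (𝓝 L)) :
    EqOn g (fun _ => L) (Ioo a b) := by
  obtain ⟨C, hC⟩ := isOpen_Ioo.exists_is_const_of_deriv_eq_zero isPreconnected_Ioo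
    (fun s hs => (hg s hs).differentiableAt.differentiableWithinAt) (fun s hs => (hg s hs).deriv)
  have : NeBot (𝓝[Ioo a b] a) := left_nhdsWithin_Ioo_neBot hab
  have hCL : C = L :=
    tendsto_nhds_unique (tendsto_const_nhds.congr' (eventuallyEq_nhdsWithin_of_eqOn hC).symm) hlim
  exact fun s hs => (hC s hs).trans hCL

theorem ode_const_solution_general (a b c : ℝ) (ha : 1 ≤ a) (hab : a < b)
    (f f' : ℝ → ℝ)
    (hder : ∀ s ∈ Set.Ioo a b, HasDerivAt f (f' s) s)
    (hode : ∀ s ∈ Set.Ioo a b, f s + s * (s - 1) * f' s = c)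
    (hcl : (1 : ℝ) ∈ closure (Set.Ioo a b))
    (hlim : Filter.Tendsto (fun s => (1 - s) * f s)
      (nhdsWithin 1 (Set.Ioo a b)) (nhds 0)) :
    ∀ s ∈ Set.Ioo a b, f s = c := by
  obtain rfl : a = 1 :=
    le_antisymm (closure_minimal Ioo_subset_Icc_self isClosed_Icc hcl).1 ha
  have hboundary : Tendsto (fun t => ((1 - t) * f t - c) / t) (𝓝[Ioo 1 b] 1) (𝓝 (-c)) := by
    have := (hlim.sub_const c).div (tendsto_nhdsWithin_of_tendsto_nhds tendsto_id) one_ne_zero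
    rwa [zero_sub, div_one] at this
  have hconst := eqOn_const_of_hasDerivAt_zero_of_tendsto hab
    (fun s hs => hasDerivAt_one_sub_mul_sub_div_zero (by linarith [hs.1]) (hder s hs) (hode s hs))
    hboundary
  intro s hs
  have hs0 : s ≠ 0 := by linarith [hs.1]
  have hs1 : 1 - s ≠ 0 := by linarith [hs.1]
  have hval : ((1 - s) * f s - c) / s = -c := hconst hs
  field_simp at hval
  exact mul_left_cancel₀ hs1 (by linear_combination hval)

/-- Let `a < b` with `a, b ∈ [1, ∞)`, let `c, k` be real constants, and suppose
`f` is differentiable on `(a, b)` with `f s + s (s − 1) f' s = c` there, and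
`(1 − s) f s → 0` as `s → 1⁺` (with `1` in the closure of `(a, b)`).
Then `f s = c` for all `s ∈ (a, b)`. -/
theorem ode_const_solution (a b c k : ℝ) (ha : 1 ≤ a) (hb : 1 ≤ b) (hab : a < b)
    (f f' : ℝ → ℝ)
    (hder : ∀ s ∈ Set.Ioo a b, HasDerivAt f (f' s) s)
    (hode : ∀ s ∈ Set.Ioo a b, f s + s * (s - 1) * f' s = c)
    (hcl : (1 : ℝ) ∈ closure (Set.Ioo a b))
    (hlim : Filter.Tendsto (fun s => (1 - s) * f s)
      (nhdsWithin 1 (Set.Ioo a b)) (nhds 0)) :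
    ∀ s ∈ Set.Ioo a b, f s = c :=
  ode_const_solution_general a b c ha hab f f' hder hode hcl hlim
end

section
/- Let ρ, σ be positive semidefinite operators on a finite-dimensional Hilbert space, λ ∈ ℝ and s ∈ (0,1). Then tr[σ · {ρ ≥ e^λ σ}] ≤ e^{−λ s} tr[ρ^s σ^{1−s}]. -/
/-!
Put `B = e^λ σ`, `X = ρ - B` and `P = {X ≥ 0}`. Then `X P = X⁺`, so
`tr[B P] = tr[ρ P] - tr[X⁺] ≤ tr[ρ] - tr[X⁺]`. Both `ρ` and `B` lie below
`M = B + X⁺ = ρ + X⁻`, and since `t ↦ t ^ s` is operator monotone for `s ∈ [0, 1]`,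
Audenaert's argument gives `tr[ρ] - tr[ρ^s B^{1-s}] ≤ tr[M] - tr[B] = tr[X⁺]`.
Hence `tr[B P] ≤ tr[ρ^s B^{1-s}] = e^{λ(1-s)} tr[ρ^s σ^{1-s}]`.
-/

open scoped ComplexOrder

namespace QIT

variable {d : Type*} [Fintype d] [DecidableEq d]

/-- The orthogonal projection onto the subspace corresponding to the
nonnegative eigenvalues of a Hermitian matrix `A`, i.e. the projection `{A ≥ 0}`. -/
noncomputable def posProj {A : Matrix d d ℂ} (hA : A.IsHermitian) : Matrix d d ℂ :=
  (Matrix.IsHermitian.eigenvectorUnitary hA : Matrix d d ℂ) *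
    Matrix.diagonal (fun i => if 0 ≤ hA.eigenvalues i then (1 : ℂ) else 0) *
    star (Matrix.IsHermitian.eigenvectorUnitary hA : Matrix d d ℂ)

/-- The real power `A^s` of a positive semidefinite matrix `A`, with the power
taken on the support of `A` (eigenvalue `0` is sent to `0` for `s > 0`). -/
noncomputable def mpow {A : Matrix d d ℂ} (hA : A.IsHermitian) (s : ℝ) : Matrix d d ℂ :=
  (Matrix.IsHermitian.eigenvectorUnitary hA : Matrix d d ℂ) *
    Matrix.diagonal (fun i => ((hA.eigenvalues i ^ s : ℝ) : ℂ)) *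
    star (Matrix.IsHermitian.eigenvectorUnitary hA : Matrix d d ℂ)

open scoped MatrixOrder Matrix.Norms.L2Operator
open Matrix

section CStarAlgebra

variable {A : Type*} [CStarAlgebra A] [PartialOrder A] [StarOrderedRing A]

theorem _root_.CFC.rpow_mul_rpow_one_sub (a : A) {s : ℝ} (hs : s ∈ Set.Icc 0 1)
    (ha : 0 ≤ a := by cfc_tac) : a ^ s * a ^ (1 - s) = a := by
  have hs' : 0 ≤ 1 - s := sub_nonneg.mpr hs.2
  rw [CFC.rpow_def, CFC.rpow_def, ← cfc_mul _ _ a (NNReal.continuous_rpow_const hs.1).continuousOn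
    (NNReal.continuous_rpow_const hs').continuousOn]
  conv_rhs => rw [← cfc_id' NNReal a]
  refine cfc_congr fun x _ => ?_
  rw [← NNReal.rpow_add' (by norm_num), add_sub_cancel, NNReal.rpow_one]

theorem _root_.CFC.smul_rpow {c : ℝ} (hc : 0 ≤ c) (a : A) {y : ℝ} (hy : 0 ≤ y)
    (ha : 0 ≤ a := by cfc_tac) : (c • a) ^ y = c ^ y • a ^ y := by
  have hcont : Continuous fun x : ℝ => x ^ y := Real.continuous_rpow_const hy
  rw [CFC.rpow_eq_cfc_real (smul_nonneg hc ha), CFC.rpow_eq_cfc_real ha,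
    ← cfc_smul (c ^ y) _ a hcont.continuousOn, ← cfc_comp_smul c _ a hcont.continuousOn]
  exact cfc_congr fun x hx => Real.mul_rpow hc (spectrum_nonneg_of_nonneg ha hx)

end CStarAlgebra

theorem _root_.Matrix.re_trace_mul_nonneg {A B : Matrix d d ℂ} (hA : 0 ≤ A) (hB : 0 ≤ B) :
    0 ≤ (A * B).trace.re := by
  obtain ⟨C, rfl⟩ := CStarAlgebra.nonneg_iff_eq_star_mul_self.mp hB
  rw [← Matrix.mul_assoc, trace_mul_cycle, star_eq_conjTranspose]
  exact (Complex.nonneg_iff.mp (hA.posSemidef.mul_mul_conjTranspose_same C).trace_nonneg).1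

theorem _root_.Matrix.re_trace_sub_re_trace_rpow_mul_rpow_le {ρ B M : Matrix d d ℂ}
    (hρ : 0 ≤ ρ) (hB : 0 ≤ B) (hρM : ρ ≤ M) (hBM : B ≤ M) {s : ℝ} (hs : s ∈ Set.Icc 0 1) :
    ρ.trace.re - (ρ ^ s * B ^ (1 - s)).trace.re ≤ M.trace.re - B.trace.re := by
  have ht : 1 - s ∈ Set.Icc 0 1 := ⟨sub_nonneg.2 hs.2, sub_le_self _ hs.1⟩
  have hM : 0 ≤ M := hρ.trans hρM
  -- `tr[M] - tr[B] - tr[ρ] + tr[ρ^s B^{1-s}]` is the sum of the three nonnegative traces below.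
  have n₁ := re_trace_mul_nonneg (CFC.rpow_nonneg (a := ρ) (y := s))
    (sub_nonneg.2 (CFC.rpow_le_rpow ht hρM))
  have n₂ := re_trace_mul_nonneg (sub_nonneg.2 (CFC.rpow_le_rpow hs hρM))
    (sub_nonneg.2 (CFC.rpow_le_rpow ht hBM))
  have n₃ := re_trace_mul_nonneg (sub_nonneg.2 (CFC.rpow_le_rpow hs hBM))
    (CFC.rpow_nonneg (a := B) (y := 1 - s))
  simp only [Matrix.mul_sub, Matrix.sub_mul, trace_sub, Complex.sub_re] at n₁ n₂ n₃
  rw [CFC.rpow_mul_rpow_one_sub ρ hs hρ] at n₁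
  rw [CFC.rpow_mul_rpow_one_sub M hs hM] at n₂
  rw [CFC.rpow_mul_rpow_one_sub B hs hB] at n₃
  linarith

theorem posProj_eq_cfc {A : Matrix d d ℂ} (hA : A.IsHermitian) :
    posProj hA = cfc (fun x : ℝ => if 0 ≤ x then 1 else 0) A := by
  rw [hA.cfc_eq, IsHermitian.cfc, Unitary.conjStarAlgAut_apply, posProj]
  congr 3 with i
  simp [apply_ite]

theorem mpow_eq_rpow {A : Matrix d d ℂ} (hA : A.PosSemidef) (s : ℝ) :
    mpow hA.isHermitian s = A ^ s := by
  rw [CFC.rpow_eq_cfc_real hA.nonneg, hA.isHermitian.cfc_eq, IsHermitian.cfc,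
    Unitary.conjStarAlgAut_apply, mpow]
  rfl

theorem posProj_le_one {A : Matrix d d ℂ} (hA : A.IsHermitian) : posProj hA ≤ 1 := by
  rw [posProj_eq_cfc]
  exact cfc_le_one _ A fun x _ => by split_ifs <;> norm_num

theorem mul_posProj {A : Matrix d d ℂ} (hA : A.IsHermitian) : A * posProj hA = A⁺ := by
  have hA' : IsSelfAdjoint A := hA
  rw [posProj_eq_cfc, CFC.posPart_def, cfcₙ_eq_cfc]
  conv_lhs => enter [1]; rw [← cfc_id' ℝ A]
  rw [← cfc_mul _ _ A (hg := A.finite_real_spectrum.continuousOn _)]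
  refine cfc_congr fun x _ => ?_
  split_ifs with hx
  · simp [posPart_of_nonneg hx]
  · simp [posPart_of_nonpos (not_le.1 hx).le]

theorem re_trace_mul_posProj_le {ρ B : Matrix d d ℂ} (hρ : 0 ≤ ρ) (hB : 0 ≤ B)
    (hX : (ρ - B).IsHermitian) {s : ℝ} (hs : s ∈ Set.Icc 0 1) :
    (B * posProj hX).trace.re ≤ (ρ ^ s * B ^ (1 - s)).trace.re := by
  set X := ρ - B
  set P := posProj hX
  have hXP : (X * P).trace.re = (ρ * P).trace.re - (B * P).trace.re := by
    simp only [X, Matrix.sub_mul, trace_sub, Complex.sub_re]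
  have hρP : (ρ * P).trace.re ≤ ρ.trace.re := by
    have := re_trace_mul_nonneg hρ (sub_nonneg.2 (posProj_le_one hX))
    simpa only [Matrix.mul_sub, Matrix.mul_one, trace_sub, Complex.sub_re, sub_nonneg] using this
  have hρM : ρ ≤ B + X⁺ := by
    have hX' : X⁺ = X + X⁻ := sub_eq_iff_eq_add.mp (CFC.posPart_sub_negPart X hX)
    rw [hX', ← sub_nonneg, show B + (X + X⁻) - ρ = X⁻ by simp only [X]; abel]
    exact CFC.negPart_nonneg X
  have hBM : B ≤ B + X⁺ := le_add_of_nonneg_right (CFC.posPart_nonneg X)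
  have key := re_trace_sub_re_trace_rpow_mul_rpow_le hρ hB hρM hBM hs
  rw [trace_add, Complex.add_re, ← mul_posProj hX] at key
  linarith

/-- Let `ρ, σ ≥ 0`, `λ ∈ ℝ`, `s ∈ (0,1)`.  Then
`tr[σ {ρ ≥ e^λ σ}] ≤ e^{−λ s} tr[ρ^s σ^{1−s}]`, where `{ρ ≥ e^λ σ}` is the
projection onto the nonnegative eigenspace of `ρ − e^λ σ`. -/
theorem trace_mul_posProj_le (ρ σ : Matrix d d ℂ)
    (hρ : ρ.PosSemidef) (hσ : σ.PosSemidef)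
    (lam s : ℝ) (hs : s ∈ Set.Ioo (0 : ℝ) 1)
    (hH : (ρ - ((Real.exp lam : ℝ) : ℂ) • σ).IsHermitian) :
    (σ * posProj hH).trace.re
      ≤ Real.exp (-lam * s) *
        (mpow hρ.isHermitian s * mpow hσ.isHermitian (1 - s)).trace.re := by
  have hpow : ((Real.exp lam : ℂ) • σ) ^ (1 - s) = Real.exp (lam * (1 - s)) • σ ^ (1 - s) := by
    rw [Complex.coe_smul, Real.exp_mul]
    exact CFC.smul_rpow (Real.exp_pos lam).le σ (sub_nonneg.2 hs.2.le) hσ.nonneg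
  have key := re_trace_mul_posProj_le hρ.nonneg
    (hσ.smul (a := (Real.exp lam : ℂ)) (Complex.zero_le_real.2 (Real.exp_pos lam).le)).nonneg hH
    (Set.Ioo_subset_Icc_self hs)
  rw [hpow, smul_mul_assoc, mul_smul_comm, trace_smul, trace_smul, smul_eq_mul,
    Complex.re_ofReal_mul, Complex.real_smul, Complex.re_ofReal_mul,
    show lam * (1 - s) = lam + -lam * s by ring, Real.exp_add, mul_assoc] at key
  rw [mpow_eq_rpow hρ, mpow_eq_rpow hσ]
  exact le_of_mul_le_mul_left key (Real.exp_pos lam)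

end QIT
end

section
/- For a bipartite state ρ_{AB}, define α̂ₙ(μ) with alternative hypothesis {σ⊗τ : σ permutation-invariant state on A^⊗n, τ permutation-invariant state on B^⊗n}, and α̂ₙ'(μ) with alternative hypothesis {σ⊗τ : σ permutation-invariant state on A^⊗n, τ arbitrary state on B^n}. Then α̂ₙ(μ) = α̂ₙ'(μ) for all μ ∈ [0,∞). -/
/-!
A test meeting the type-II constraint against every `σ ⊗ τ` meets it in particular for symmetric
`τ`, so `α̂ₙ ≤ α̂ₙ'`. Conversely, average a feasible test `T` for `α̂ₙ` over the simultaneous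
permutations of the `n` copies of `A` and `B`. The average is again a test and has the same
type-I error, since `ρ^{⊗n}` is permutation invariant. Averaging is self-adjoint for the trace
pairing, so against `σ ⊗ τ` with `σ` symmetric the averaged test errs exactly as much as `T`
does against `σ ⊗ τ̄`, where `τ̄` is the average of `τ`: a permutation-invariant state.
-/

open scoped BigOperators ComplexOrder

namespace QIT

variable {α β : Type*} [Fintype α] [DecidableEq α] [Fintype β] [DecidableEq β]

/-- A quantum state: positive semidefinite with unit trace. -/
def IsState (ρ : Matrix α α ℂ) : Prop := ρ.PosSemidef ∧ ρ.trace = 1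

/-- A test: an operator `T` with `0 ≤ T ≤ 1`. -/
def IsTest (T : Matrix α α ℂ) : Prop := T.PosSemidef ∧ (1 - T).PosSemidef

/-- Tensor (Kronecker) product of two operators. -/
def prodMat (σ : Matrix α α ℂ) (τ : Matrix β β ℂ) : Matrix (α × β) (α × β) ℂ :=
  fun x y => σ x.1 y.1 * τ x.2 y.2

/-- `n`-fold tensor power of an operator. -/
def tensorPow (ρ : Matrix α α ℂ) (n : ℕ) : Matrix (Fin n → α) (Fin n → α) ℂ :=
  fun x y => ∏ i, ρ (x i) (y i)

/-- `n`-fold tensor power of a bipartite operator, indices grouped as `Aⁿ × Bⁿ`. -/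
def bipartitePow (ρ : Matrix (α × β) (α × β) ℂ) (n : ℕ) :
    Matrix ((Fin n → α) × (Fin n → β)) ((Fin n → α) × (Fin n → β)) ℂ :=
  fun x y => ∏ i, ρ (x.1 i, x.2 i) (y.1 i, y.2 i)

/-- Permutation invariance of an operator on an `n`-fold tensor power. -/
def PermInvariant {n : ℕ} (σ : Matrix (Fin n → α) (Fin n → α) ℂ) : Prop :=
  ∀ π : Equiv.Perm (Fin n), ∀ x y, σ (x ∘ π) (y ∘ π) = σ x y


/-- Minimum type-I error with alternative hypothesis
`{σ ⊗ τ : σ, τ permutation-invariant states}`. -/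
noncomputable def alphaHatSym (ρ : Matrix (α × β) (α × β) ℂ) (n : ℕ) (μ : ℝ) : ℝ :=
  sInf {r : ℝ |
    ∃ T : Matrix ((Fin n → α) × (Fin n → β)) ((Fin n → α) × (Fin n → β)) ℂ,
      IsTest T ∧
      (∀ (σ : Matrix (Fin n → α) (Fin n → α) ℂ) (τ : Matrix (Fin n → β) (Fin n → β) ℂ),
        IsState σ → PermInvariant σ → IsState τ → PermInvariant τ →
          ((prodMat σ τ) * T).trace.re ≤ μ) ∧
      r = ((bipartitePow ρ n) * (1 - T)).trace.re}

/-- Minimum type-I error with alternative hypothesis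
`{σ ⊗ τ : σ permutation-invariant state, τ arbitrary state}`. -/
noncomputable def alphaHatSymA (ρ : Matrix (α × β) (α × β) ℂ) (n : ℕ) (μ : ℝ) : ℝ :=
  sInf {r : ℝ |
    ∃ T : Matrix ((Fin n → α) × (Fin n → β)) ((Fin n → α) × (Fin n → β)) ℂ,
      IsTest T ∧
      (∀ (σ : Matrix (Fin n → α) (Fin n → α) ℂ) (τ : Matrix (Fin n → β) (Fin n → β) ℂ),
        IsState σ → PermInvariant σ → IsState τ →
          ((prodMat σ τ) * T).trace.re ≤ μ) ∧
      r = ((bipartitePow ρ n) * (1 - T)).trace.re}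

open scoped Kronecker

section Twirl

variable {𝕜 G ι κ : Type*} [Group G] [Fintype G]

lemma trace_submatrix_equiv {R : Type*} [Fintype ι] [AddCommMonoid R] (e : ι ≃ ι)
    (M : Matrix ι ι R) : (M.submatrix e e).trace = M.trace :=
  Equiv.sum_comp e fun i => M i i

lemma trace_mul_submatrix_equiv {R : Type*} [Fintype ι] [NonUnitalNonAssocSemiring R]
    (e : ι ≃ ι) (A B : Matrix ι ι R) :
    (A * B.submatrix e e).trace = (A.submatrix e.symm e.symm * B).trace := by
  rw [← trace_submatrix_equiv e (A.submatrix e.symm e.symm * B),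
    ← Matrix.submatrix_mul_equiv (A.submatrix e.symm e.symm) B e e e]
  simp

variable [RCLike 𝕜]

noncomputable def twirl (φ : G →* Equiv.Perm ι) (M : Matrix ι ι 𝕜) : Matrix ι ι 𝕜 :=
  (Fintype.card G : 𝕜)⁻¹ • ∑ g, M.submatrix (φ g) (φ g)

variable (φ : G →* Equiv.Perm ι)

lemma twirl_sub (A B : Matrix ι ι 𝕜) : twirl φ (A - B) = twirl φ A - twirl φ B := by
  rw [twirl, twirl, twirl, ← smul_sub, ← Finset.sum_sub_distrib]
  rfl

lemma twirl_eq_self {M : Matrix ι ι 𝕜} (hM : ∀ g, M.submatrix (φ g) (φ g) = M) :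
    twirl φ M = M := by
  simp [twirl, hM, Finset.card_univ, ← Nat.cast_smul_eq_nsmul 𝕜, smul_smul]

lemma twirl_one_sub [DecidableEq ι] (M : Matrix ι ι 𝕜) : twirl φ (1 - M) = 1 - twirl φ M := by
  rw [twirl_sub, twirl_eq_self φ fun g => Matrix.submatrix_one_equiv (φ g)]

lemma submatrix_twirl (M : Matrix ι ι 𝕜) (h : G) :
    (twirl φ M).submatrix (φ h) (φ h) = twirl φ M := by
  ext x y
  simp only [twirl, Matrix.submatrix_apply, Matrix.smul_apply, Matrix.sum_apply]
  congr 1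
  exact Fintype.sum_equiv (Equiv.mulRight h) _ _ fun g => by simp

lemma trace_twirl [Fintype ι] (M : Matrix ι ι 𝕜) : (twirl φ M).trace = M.trace := by
  simp [twirl, Matrix.trace_sum, trace_submatrix_equiv, Finset.card_univ,
    ← Nat.cast_smul_eq_nsmul 𝕜]

lemma trace_mul_twirl [Fintype ι] (A B : Matrix ι ι 𝕜) :
    (A * twirl φ B).trace = (twirl φ A * B).trace := by
  simp only [twirl, Matrix.mul_smul, Matrix.smul_mul, Matrix.mul_sum, Matrix.sum_mul,
    Matrix.trace_smul, Matrix.trace_sum, trace_mul_submatrix_equiv]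
  congr 1
  exact Fintype.sum_equiv (Equiv.inv G) _ _ fun g => by simp

lemma posSemidef_twirl [Fintype ι] {M : Matrix ι ι 𝕜} (hM : M.PosSemidef) :
    (twirl φ M).PosSemidef :=
  (Matrix.posSemidef_sum _ fun g _ => hM.submatrix _).smul (by positivity)

def permProd (φ : G →* Equiv.Perm ι) (ψ : G →* Equiv.Perm κ) : G →* Equiv.Perm (ι × κ) where
  toFun g := (φ g).prodCongr (ψ g)
  map_one' := by ext <;> simp
  map_mul' g h := by ext <;> simp

lemma twirl_kronecker {ψ : G →* Equiv.Perm κ} {A : Matrix ι ι 𝕜}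
    (hA : ∀ g, A.submatrix (φ g) (φ g) = A) (B : Matrix κ κ 𝕜) :
    twirl (permProd φ ψ) (A ⊗ₖ B) = A ⊗ₖ twirl ψ B := by
  have hsummand (g : G) : (A ⊗ₖ B).submatrix (permProd φ ψ g) (permProd φ ψ g) =
      A ⊗ₖ B.submatrix (ψ g) (ψ g) := by
    conv_rhs => rw [← hA g]
    rfl
  simp only [twirl, hsummand, Matrix.kronecker_smul]
  congr 1
  ext x y
  simp [Matrix.sum_apply, Finset.mul_sum]

end Twirl

lemma IsTest.twirl {ι G : Type*} [Group G] [Fintype G] [Fintype ι] [DecidableEq ι]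
    (φ : G →* Equiv.Perm ι) {T : Matrix ι ι ℂ} (hT : IsTest T) : IsTest (twirl φ T) :=
  ⟨posSemidef_twirl φ hT.1, twirl_one_sub φ T ▸ posSemidef_twirl φ hT.2⟩

lemma IsState.twirl {ι G : Type*} [Group G] [Fintype G] [Fintype ι] [DecidableEq ι]
    (φ : G →* Equiv.Perm ι) {M : Matrix ι ι ℂ} (hM : IsState M) : IsState (twirl φ M) :=
  ⟨posSemidef_twirl φ hM.1, (trace_twirl φ M).trans hM.2⟩

lemma prodMat_eq_kronecker {γ δ : Type*} (σ : Matrix γ γ ℂ) (τ : Matrix δ δ ℂ) :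
    prodMat σ τ = σ ⊗ₖ τ :=
  rfl

/-- Precomposition with `π⁻¹` rather than `π`, so that this is a homomorphism. -/
def permFactors (n : ℕ) (γ : Type*) : Equiv.Perm (Fin n) →* Equiv.Perm (Fin n → γ) where
  toFun π := π.arrowCongr (Equiv.refl γ)
  map_one' := rfl
  map_mul' _ _ := rfl

lemma permInvariant_iff {γ : Type*} {n : ℕ} {σ : Matrix (Fin n → γ) (Fin n → γ) ℂ} :
    PermInvariant σ ↔ ∀ π, σ.submatrix (permFactors n γ π) (permFactors n γ π) = σ :=
  ⟨fun h π => Matrix.ext fun x y => h π⁻¹ x y, fun h π x y => congrFun₂ (h π⁻¹) x y⟩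

lemma bipartitePow_submatrix_permFactors {γ δ : Type*} (ρ : Matrix (γ × δ) (γ × δ) ℂ) (n : ℕ)
    (π : Equiv.Perm (Fin n)) :
    (bipartitePow ρ n).submatrix (permProd (permFactors n γ) (permFactors n δ) π)
      (permProd (permFactors n γ) (permFactors n δ) π) = bipartitePow ρ n := by
  ext x y
  exact Equiv.prod_comp π⁻¹ fun i => ρ (x.1 i, x.2 i) (y.1 i, y.2 i)

theorem alphaHatSym_eq_alphaHatSymA_general (ρ : Matrix (α × β) (α × β) ℂ) (n : ℕ) (μ : ℝ) :
    alphaHatSym ρ n μ = alphaHatSymA ρ n μ := by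
  unfold alphaHatSym alphaHatSymA
  congr 1
  ext r
  constructor
  · rintro ⟨T, hT, hcon, rfl⟩
    set φ := permProd (permFactors n α) (permFactors n β)
    refine ⟨twirl φ T, hT.twirl φ, fun σ τ hσ hσp hτ => ?_, ?_⟩
    · rw [prodMat_eq_kronecker, trace_mul_twirl, twirl_kronecker _ (permInvariant_iff.1 hσp)]
      exact hcon σ _ hσ hσp (hτ.twirl _) (permInvariant_iff.2 (submatrix_twirl _ τ))
    · rw [← twirl_one_sub, trace_mul_twirl,
        twirl_eq_self φ (bipartitePow_submatrix_permFactors ρ n)]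
  · rintro ⟨T, hT, hcon, hr⟩
    exact ⟨T, hT, fun σ τ hσ hσp hτ _ => hcon σ τ hσ hσp hτ, hr⟩

/-- The minimum type-I errors with alternative hypotheses symmetric on both
subsystems, resp. symmetric only on `Aⁿ`, coincide: `α̂ₙ(μ) = α̂ₙ'(μ)` for all
`μ ∈ [0, ∞)`. -/
theorem alphaHatSym_eq_alphaHatSymA (ρ : Matrix (α × β) (α × β) ℂ)
    (hρ : IsState ρ) (n : ℕ) (μ : ℝ) (hμ : 0 ≤ μ) :
    alphaHatSym ρ n μ = alphaHatSymA ρ n μ :=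
  alphaHatSym_eq_alphaHatSymA_general ρ n μ

end QIT
end

section
/- Let p ∈ (1/2, 1) and let ρ_{AB} = p|0,0⟩⟨0,0| + (1−p)|1,1⟩⟨1,1| be a classically correlated two-qubit state. Then for every n ≥ 1 and every μ ∈ [0,1], the minimum type-I error α̂ₙ^{ind}(μ) with alternative hypothesis all product states σ_{A^n} ⊗ τ_{B^n} equals exactly 1 − μ. -/
/-! The state `ρ` is separable, so `ρ^{⊗n}` is a convex combination of product states `σ ⊗ τ`
across the `Aⁿ : Bⁿ` cut. Every test `T` admissible for the alternative therefore has
`tr[ρ^{⊗n} T] ≤ μ`, i.e. type-I error at least `1 − μ`, and the trivial test `T = μ·1` attains it. -/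

open scoped BigOperators ComplexOrder

namespace QIT

variable {α β : Type*} [Fintype α] [DecidableEq α] [Fintype β] [DecidableEq β]

/-- Minimum type-I error with alternative hypothesis
`{σ ⊗ τ : σ ∈ S(Aⁿ), τ ∈ S(Bⁿ)}` (all product states across the `Aⁿ : Bⁿ` cut). -/
noncomputable def alphaHatInd (ρ : Matrix (α × β) (α × β) ℂ) (n : ℕ) (μ : ℝ) : ℝ :=
  sInf {r : ℝ |
    ∃ T : Matrix ((Fin n → α) × (Fin n → β)) ((Fin n → α) × (Fin n → β)) ℂ,
      IsTest T ∧
      (∀ (σ : Matrix (Fin n → α) (Fin n → α) ℂ) (τ : Matrix (Fin n → β) (Fin n → β) ℂ),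
        IsState σ → IsState τ → ((prodMat σ τ) * T).trace.re ≤ μ) ∧
      r = ((bipartitePow ρ n) * (1 - T)).trace.re}

end QIT

namespace QIT

variable {α β : Type*}

lemma isTest_smul_one [DecidableEq α] {μ : ℝ} (hμ : μ ∈ Set.Icc (0 : ℝ) 1) :
    IsTest ((μ : ℂ) • (1 : Matrix α α ℂ)) := by
  refine ⟨Matrix.PosSemidef.one.smul (by exact_mod_cast hμ.1), ?_⟩
  have h : (1 : Matrix α α ℂ) - (μ : ℂ) • 1 = ((1 - μ : ℝ) : ℂ) • 1 := by
    rw [Complex.ofReal_sub, Complex.ofReal_one, sub_smul, one_smul]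
  rw [h]
  exact Matrix.PosSemidef.one.smul (by exact_mod_cast sub_nonneg.mpr hμ.2)

variable [Fintype α] [Fintype β]

lemma trace_prodMat (σ : Matrix α α ℂ) (τ : Matrix β β ℂ) :
    (prodMat σ τ).trace = σ.trace * τ.trace := by
  simp [Matrix.trace, prodMat, Fintype.sum_prod_type, Finset.sum_mul_sum]

lemma isState_single [DecidableEq α] (a : α) : IsState (Matrix.single a a (1 : ℂ)) := by
  refine ⟨?_, by simp [Matrix.trace]⟩
  rw [← Matrix.diagonal_single, Matrix.posSemidef_diagonal_iff]
  exact Pi.single_nonneg.mpr zero_le_one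

lemma bipartitePow_classical [DecidableEq α] (q : α → ℝ) (n : ℕ) :
    bipartitePow (∑ a, (q a : ℂ) • Matrix.single (a, a) (a, a) 1) n
      = ∑ s : Fin n → α, ((∏ i, q (s i) : ℝ) : ℂ) •
          prodMat (Matrix.single s s 1) (Matrix.single s s 1) := by
  ext x y
  simp only [bipartitePow, Matrix.sum_apply, Matrix.smul_apply, smul_eq_mul, Fintype.prod_sum,
    Finset.prod_mul_distrib, prodMat, Complex.ofReal_prod]
  refine Finset.sum_congr rfl fun s _ => congrArg _ ?_
  simp only [Matrix.single_apply, Prod.mk.injEq, Finset.prod_boole, funext_iff,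
    Finset.mem_univ, true_implies, forall_and, ite_zero_mul_ite_zero, mul_one]
  congr 1
  exact propext (by tauto)

section ConvexCombination

variable {ι : Type*} [Fintype ι] {w : ι → ℝ} {σ : ι → Matrix α α ℂ} {τ : ι → Matrix β β ℂ}

lemma trace_sum_smul_prodMat (hw : ∑ i, w i = 1) (hσ : ∀ i, IsState (σ i))
    (hτ : ∀ i, IsState (τ i)) :
    (∑ i, (w i : ℂ) • prodMat (σ i) (τ i)).trace = 1 := by
  simp only [Matrix.trace_sum, Matrix.trace_smul, trace_prodMat, (hσ _).2, (hτ _).2,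
    mul_one, smul_eq_mul]
  exact_mod_cast hw

lemma re_trace_sum_smul_prodMat_mul_le (hw₀ : ∀ i, 0 ≤ w i) (hw : ∑ i, w i = 1)
    {T : Matrix (α × β) (α × β) ℂ} {μ : ℝ} (hT : ∀ i, (prodMat (σ i) (τ i) * T).trace.re ≤ μ) :
    ((∑ i, (w i : ℂ) • prodMat (σ i) (τ i)) * T).trace.re ≤ μ := by
  simp only [Finset.sum_mul, Matrix.smul_mul, Matrix.trace_sum, Matrix.trace_smul, smul_eq_mul,
    Complex.re_sum, Complex.re_ofReal_mul]
  calc ∑ i, w i * (prodMat (σ i) (τ i) * T).trace.re ≤ ∑ i, w i * μ :=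
        Finset.sum_le_sum fun i _ => mul_le_mul_of_nonneg_left (hT i) (hw₀ i)
    _ = μ := by rw [← Finset.sum_mul, hw, one_mul]

end ConvexCombination

theorem alphaHatInd_eq_one_sub_of_separable [DecidableEq α] [DecidableEq β]
    {ρ : Matrix (α × β) (α × β) ℂ} {n : ℕ} {ι : Type*} [Fintype ι] {w : ι → ℝ}
    {σ : ι → Matrix (Fin n → α) (Fin n → α) ℂ} {τ : ι → Matrix (Fin n → β) (Fin n → β) ℂ}
    (hw₀ : ∀ i, 0 ≤ w i) (hw : ∑ i, w i = 1) (hσ : ∀ i, IsState (σ i)) (hτ : ∀ i, IsState (τ i))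
    (hρ : bipartitePow ρ n = ∑ i, (w i : ℂ) • prodMat (σ i) (τ i))
    {μ : ℝ} (hμ : μ ∈ Set.Icc (0 : ℝ) 1) :
    alphaHatInd ρ n μ = 1 - μ := by
  have htr : (bipartitePow ρ n).trace = 1 := hρ ▸ trace_sum_smul_prodMat hw hσ hτ
  refine IsLeast.csInf_eq ⟨⟨(μ : ℂ) • 1, isTest_smul_one hμ, fun σ' τ' hσ' hτ' => ?_, ?_⟩, ?_⟩
  · simp [trace_prodMat, hσ'.2, hτ'.2]
  · simp [Matrix.mul_sub, htr]
  · rintro r ⟨T, -, hT, rfl⟩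
    have hρT : ((bipartitePow ρ n) * T).trace.re ≤ μ :=
      hρ ▸ re_trace_sum_smul_prodMat_mul_le hw₀ hw fun i => hT _ _ (hσ i) (hτ i)
    simp only [Matrix.mul_sub, Matrix.mul_one, Matrix.trace_sub, Complex.sub_re, htr,
      Complex.one_re]
    linarith

theorem alphaHatInd_cc_state_general (p : ℝ) (hp : p ∈ Set.Ioo (1/2 : ℝ) 1)
    (ρ : Matrix (Fin 2 × Fin 2) (Fin 2 × Fin 2) ℂ)
    (hρ : ρ = (p : ℂ) • Matrix.single ((0 : Fin 2), (0 : Fin 2))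
        ((0 : Fin 2), (0 : Fin 2)) 1
      + ((1 - p : ℝ) : ℂ) • Matrix.single ((1 : Fin 2), (1 : Fin 2))
        ((1 : Fin 2), (1 : Fin 2)) 1)
    (n : ℕ) (μ : ℝ) (hμ : μ ∈ Set.Icc (0 : ℝ) 1) :
    alphaHatInd ρ n μ = 1 - μ := by
  set q : Fin 2 → ℝ := ![p, 1 - p]
  have hq₀ : ∀ a, 0 ≤ q a := Fin.forall_fin_two.mpr
    ⟨show 0 ≤ p by linarith [hp.1], show 0 ≤ 1 - p by linarith [hp.2]⟩
  have hq : ∑ a, q a = 1 := by simp [q, Fin.sum_univ_two]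
  have hρq : ρ = ∑ a, (q a : ℂ) • Matrix.single (a, a) (a, a) 1 := by
    simp [hρ, q, Fin.sum_univ_two]
  refine alphaHatInd_eq_one_sub_of_separable (fun s => Finset.prod_nonneg fun i _ => hq₀ (s i))
    ?_ isState_single isState_single (hρq ▸ bipartitePow_classical q n) hμ
  rw [← Fintype.prod_sum, hq, Finset.prod_const_one]

/-- For `p ∈ (1/2, 1)` and the classically correlated two-qubit state
`ρ = p |0,0⟩⟨0,0| + (1−p) |1,1⟩⟨1,1|`, one has `α̂ₙ^{ind}(μ) = 1 − μ` for every
`n ≥ 1` and `μ ∈ [0, 1]`. -/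
theorem alphaHatInd_cc_state (p : ℝ) (hp : p ∈ Set.Ioo (1/2 : ℝ) 1)
    (ρ : Matrix (Fin 2 × Fin 2) (Fin 2 × Fin 2) ℂ)
    (hρ : ρ = (p : ℂ) • Matrix.single ((0 : Fin 2), (0 : Fin 2))
        ((0 : Fin 2), (0 : Fin 2)) 1
      + ((1 - p : ℝ) : ℂ) • Matrix.single ((1 : Fin 2), (1 : Fin 2))
        ((1 : Fin 2), (1 : Fin 2)) 1)
    (n : ℕ) (hn : 1 ≤ n) (μ : ℝ) (hμ : μ ∈ Set.Icc (0 : ℝ) 1) :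
    alphaHatInd ρ n μ = 1 - μ :=
  alphaHatInd_cc_state_general p hp ρ hρ n μ hμ

end QIT
end

section
/- Let P_{XY} be a PMF on a finite set X × Y, embedded as a classical-classical quantum state ρ_{AB} = Σ_{x,y} P_{XY}(x,y)|a_x,b_y⟩⟨a_x,b_y| for orthonormal bases {a_x}, {b_y}. Suppose the quantum alternative hypothesis H₁^{q,n} ⊆ S(A^nB^n) is closed under pinching in the product basis, and let H₁^{c,n} be the set of diagonal distributions of members of H₁^{q,n}. Then the quantum minimum type-I error equals the classical minimum type-I error: α̂ₙ^q(μ) = α̂ₙ^c(μ) for all μ ∈ [0,∞). -/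
open scoped BigOperators ComplexOrder

namespace QIT

variable {α β : Type*} [Fintype α] [DecidableEq α] [Fintype β] [DecidableEq β]

/-
The null state is diagonal, so a test `T` and its diagonal part have the same type-I error;
and `tr[σ · diag T] = tr[diag σ · T]`, so closure of the alternative under pinching makes the
diagonal part meet the same type-II constraint. Diagonal tests are exactly classical tests.
-/

open Matrix

section Pinching

variable {m : Type*} [DecidableEq m]

theorem IsTest.re_apply_self_mem_Icc {T : Matrix m m ℂ} (hT : IsTest T) (x : m) :
    (T x x).re ∈ Set.Icc (0 : ℝ) 1 := by
  have h0 : 0 ≤ (T x x).re := Complex.nonneg_iff.mp hT.1.diag_nonneg |>.1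
  have h1 : 0 ≤ ((1 - T) x x).re := Complex.nonneg_iff.mp hT.2.diag_nonneg |>.1
  simp only [Matrix.sub_apply, one_apply_eq, Complex.sub_re, Complex.one_re] at h1
  exact ⟨h0, by linarith⟩

theorem isTest_diagonal_ofReal {t : m → ℝ} (ht : ∀ x, t x ∈ Set.Icc (0 : ℝ) 1) :
    IsTest (diagonal fun x => (t x : ℂ)) := by
  have hsub : (1 : Matrix m m ℂ) - diagonal (fun x => (t x : ℂ)) =
      diagonal fun x => ((1 - t x : ℝ) : ℂ) := by
    rw [← diagonal_one, diagonal_sub]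
    simp
  refine ⟨PosSemidef.diagonal fun x => ?_, hsub ▸ PosSemidef.diagonal fun x => ?_⟩
  · exact Complex.zero_le_real.mpr (ht x).1
  · exact Complex.zero_le_real.mpr (sub_nonneg.mpr (ht x).2)

variable [Fintype m]

theorem trace_diagonal_diag_mul {R : Type*} [CommSemiring R] (A B : Matrix m m R) :
    (diagonal A.diag * B).trace = (A * diagonal B.diag).trace := by
  simp only [trace, diag, diagonal_mul, mul_diagonal]

theorem re_trace_mul_diagonal_ofReal (M : Matrix m m ℂ) (t : m → ℝ) :
    (M * diagonal fun x => (t x : ℂ)).trace.re = ∑ x, (M x x).re * t x := by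
  simp [trace, mul_diagonal, Complex.re_sum]

theorem re_trace_diagonal_ofReal_mul (p : m → ℝ) (M : Matrix m m ℂ) :
    (diagonal (fun x => (p x : ℂ)) * M).trace.re = ∑ x, p x * (M x x).re := by
  simp only [trace_mul_comm _ M, re_trace_mul_diagonal_ofReal, mul_comm]

-- The infima of these two sets are the minimum type-I errors `α̂^q(μ)` and `α̂^c(μ)` for the
-- null state `diag p`.
def quantumTypeIErrors (p : m → ℝ) (H : Set (Matrix m m ℂ)) (μ : ℝ) : Set ℝ :=
  {r | ∃ T : Matrix m m ℂ, IsTest T ∧ (∀ σ ∈ H, (σ * T).trace.re ≤ μ) ∧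
    r = (diagonal (fun x => (p x : ℂ)) * (1 - T)).trace.re}

def classicalTypeIErrors (p : m → ℝ) (H : Set (Matrix m m ℂ)) (μ : ℝ) : Set ℝ :=
  {r | ∃ t : m → ℝ, (∀ x, t x ∈ Set.Icc (0 : ℝ) 1) ∧
    (∀ Q : m → ℝ, (∃ σ ∈ H, ∀ x, Q x = (σ x x).re) → ∑ x, Q x * t x ≤ μ) ∧
    r = ∑ x, p x * (1 - t x)}

theorem classicalTypeIErrors_subset_quantum (p : m → ℝ) (H : Set (Matrix m m ℂ)) (μ : ℝ) :
    classicalTypeIErrors p H μ ⊆ quantumTypeIErrors p H μ := by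
  rintro _ ⟨t, ht, htypeII, rfl⟩
  refine ⟨diagonal fun x => (t x : ℂ), isTest_diagonal_ofReal ht, fun σ hσ => ?_, ?_⟩
  · rw [re_trace_mul_diagonal_ofReal]
    exact htypeII _ ⟨σ, hσ, fun _ => rfl⟩
  · rw [re_trace_diagonal_ofReal_mul]
    congr! 2 with x
    simp [diagonal_apply_eq]

theorem quantumTypeIErrors_subset_classical_of_pinching_mem (p : m → ℝ)
    {H : Set (Matrix m m ℂ)} (hH : ∀ σ ∈ H, diagonal σ.diag ∈ H) (μ : ℝ) :
    quantumTypeIErrors p H μ ⊆ classicalTypeIErrors p H μ := by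
  rintro _ ⟨T, hT, htypeII, rfl⟩
  have hdiag : diagonal T.diag = diagonal fun x => ((T x x).re : ℂ) :=
    congrArg diagonal (hT.1.isHermitian.coe_re_diag).symm
  refine ⟨fun x => (T x x).re, hT.re_apply_self_mem_Icc, ?_, ?_⟩
  · rintro Q ⟨σ, hσ, hQ⟩
    obtain rfl : Q = fun x => (σ x x).re := funext hQ
    have h := htypeII _ (hH σ hσ)
    rwa [trace_diagonal_diag_mul, hdiag, re_trace_mul_diagonal_ofReal] at h
  · rw [re_trace_diagonal_ofReal_mul]
    congr! 2 with x
    simp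

theorem quantumTypeIErrors_eq_classical_of_pinching_mem (p : m → ℝ)
    {H : Set (Matrix m m ℂ)} (hH : ∀ σ ∈ H, diagonal σ.diag ∈ H) (μ : ℝ) :
    quantumTypeIErrors p H μ = classicalTypeIErrors p H μ :=
  (quantumTypeIErrors_subset_classical_of_pinching_mem p hH μ).antisymm
    (classicalTypeIErrors_subset_quantum p H μ)

end Pinching

theorem quantum_eq_classical_typeI_general {X Y : Type*}
    [Fintype X] [DecidableEq X] [Fintype Y] [DecidableEq Y]
    (P : X × Y → ℝ)
    (n : ℕ)
    (H : Set (Matrix ((Fin n → X) × (Fin n → Y)) ((Fin n → X) × (Fin n → Y)) ℂ))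
    (hHpinch : ∀ σ ∈ H, Matrix.diagonal (fun x => σ x x) ∈ H)
    (μ : ℝ) :
    sInf {r : ℝ |
        ∃ T : Matrix ((Fin n → X) × (Fin n → Y)) ((Fin n → X) × (Fin n → Y)) ℂ,
          IsTest T ∧ (∀ σ ∈ H, (σ * T).trace.re ≤ μ) ∧
          r = ((Matrix.diagonal
              (fun x : (Fin n → X) × (Fin n → Y) =>
                ((∏ i, P (x.1 i, x.2 i) : ℝ) : ℂ))) * (1 - T)).trace.re}
      = sInf {r : ℝ |
        ∃ T : ((Fin n → X) × (Fin n → Y)) → ℝ,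
          (∀ x, T x ∈ Set.Icc (0 : ℝ) 1) ∧
          (∀ Q : ((Fin n → X) × (Fin n → Y)) → ℝ,
            (∃ σ ∈ H, ∀ x, Q x = (σ x x).re) → ∑ x, Q x * T x ≤ μ) ∧
          r = ∑ x : (Fin n → X) × (Fin n → Y),
            (∏ i, P (x.1 i, x.2 i)) * (1 - T x)} := by
  show sInf (quantumTypeIErrors (fun x => ∏ i, P (x.1 i, x.2 i)) H μ) =
    sInf (classicalTypeIErrors (fun x => ∏ i, P (x.1 i, x.2 i)) H μ)
  rw [quantumTypeIErrors_eq_classical_of_pinching_mem _ hHpinch]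

/-- For a PMF `P` on `X × Y` embedded as the classical-classical (diagonal)
quantum state `ρ = Σ_{x,y} P(x,y) |a_x, b_y⟩⟨a_x, b_y|`, if the quantum
alternative hypothesis `H ⊆ S(AⁿBⁿ)` is closed under pinching in the product
basis, then the quantum minimum type-I error equals the classical minimum
type-I error with classical alternative hypothesis given by the diagonal
distributions of members of `H`: `α̂ₙ^q(μ) = α̂ₙ^c(μ)` for all `μ ∈ [0, ∞)`. -/
theorem quantum_eq_classical_typeI {X Y : Type*}
    [Fintype X] [DecidableEq X] [Fintype Y] [DecidableEq Y]
    (P : X × Y → ℝ) (hP0 : ∀ z, 0 ≤ P z) (hP1 : ∑ z, P z = 1)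
    (n : ℕ) (hn : 1 ≤ n)
    (H : Set (Matrix ((Fin n → X) × (Fin n → Y)) ((Fin n → X) × (Fin n → Y)) ℂ))
    (hHne : H.Nonempty)
    (hHstate : ∀ σ ∈ H, IsState σ)
    (hHpinch : ∀ σ ∈ H, Matrix.diagonal (fun x => σ x x) ∈ H)
    (μ : ℝ) (hμ : 0 ≤ μ) :
    sInf {r : ℝ |
        ∃ T : Matrix ((Fin n → X) × (Fin n → Y)) ((Fin n → X) × (Fin n → Y)) ℂ,
          IsTest T ∧ (∀ σ ∈ H, (σ * T).trace.re ≤ μ) ∧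
          r = ((Matrix.diagonal
              (fun x : (Fin n → X) × (Fin n → Y) =>
                ((∏ i, P (x.1 i, x.2 i) : ℝ) : ℂ))) * (1 - T)).trace.re}
      = sInf {r : ℝ |
        ∃ T : ((Fin n → X) × (Fin n → Y)) → ℝ,
          (∀ x, T x ∈ Set.Icc (0 : ℝ) 1) ∧
          (∀ Q : ((Fin n → X) × (Fin n → Y)) → ℝ,
            (∃ σ ∈ H, ∀ x, Q x = (σ x x).re) → ∑ x, Q x * T x ≤ μ) ∧
          r = ∑ x : (Fin n → X) × (Fin n → Y),
            (∏ i, P (x.1 i, x.2 i)) * (1 - T x)} :=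
  quantum_eq_classical_typeI_general P n H hHpinch μ

end QIT
end
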